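/- arXiv:2106.07080 — 3 statements merged into one kernel-verified Lean document; each statement's English description precedes it below -/
import Mathlib

section
/- Let p be a real number with 0 ≤ p < 1/2, let μ be a probability measure on a measurable space X, and let h*, h1, h2, h3 : X → {−1,+1} be measurable classifiers with h* the target. Suppose the events C = {x : h1(x) = h*(x)}, I = {x : h1(x) ≠ h*(x)}, and E = {x : h1(x) ≠ h2(x)} all have positive μ-measure. Define D_C := μ(·|C), D_I := μ(·|I), D_2 := (1/2)·D_C + (1/2)·D_I, and D_3 := μ(·|E). If err_μ(h1) ≤ p, err_{D_2}(h2) ≤ p, and err_{D_3}(h3) ≤ p, then err_μ(Maj(h1,h2,h3)) ≤ 3p² − 2p³. -/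
/-!
The majority vote errs only where `h1` and `h2` both err, or where they disagree and `h3`
errs. Write `i = μ I ≤ p` and let `α, β` be the error rates of `h2` on `C` and on `I`, so
`α + β ≤ 2p`. Since exactly one of `h1, h2` is right on `E`, `μ E = (1 - i) α + i (1 - β)`, and
the error of the vote is at most `i β + p μ E`. Using `α ≤ 2p - β`, this is at most
`β (i - p) + 2p² + p i (1 - 2p) ≤ 3p² - 2p³`, as `i ≤ p ≤ 1/2`.
-/

open MeasureTheory ProbabilityTheory
open scoped ENNReal

lemma ne_and_ne_or_ne_and_ne_of_sign_add_add_ne {a b c d : ℝ} (ha : a = 1 ∨ a = -1)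
    (hb : b = 1 ∨ b = -1) (hc : c = 1 ∨ c = -1) (h : Real.sign (a + b + c) ≠ d) :
    (a ≠ d ∧ b ≠ d) ∨ (a ≠ b ∧ c ≠ d) := by
  rcases ha with rfl | rfl <;> rcases hb with rfl | rfl <;> rcases hc with rfl | rfl <;>
    norm_num [Real.sign] at h ⊢ <;> tauto

lemma eq_of_ne_of_ne_of_pm_one {a b d : ℝ} (ha : a = 1 ∨ a = -1) (hb : b = 1 ∨ b = -1)
    (hd : d = 1 ∨ d = -1) (had : a ≠ d) (hbd : b ≠ d) : a = b := by
  rcases ha with rfl | rfl <;> rcases hb with rfl | rfl <;> rcases hd with rfl | rfl <;>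
    norm_num at *

lemma setOf_sign_add_add_ne_subset {X : Type*} {f g k t : X → ℝ}
    (hf : ∀ x, f x = 1 ∨ f x = -1) (hg : ∀ x, g x = 1 ∨ g x = -1)
    (hk : ∀ x, k x = 1 ∨ k x = -1) :
    {x | Real.sign (f x + g x + k x) ≠ t x} ⊆
      {x | f x ≠ t x} ∩ {x | g x ≠ t x} ∪ {x | f x ≠ g x} ∩ {x | k x ≠ t x} :=
  fun x hx ↦ ne_and_ne_or_ne_and_ne_of_sign_add_add_ne (hf x) (hg x) (hk x) hx

lemma setOf_ne_subset {X : Type*} {f g t : X → ℝ} (hf : ∀ x, f x = 1 ∨ f x = -1)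
    (hg : ∀ x, g x = 1 ∨ g x = -1) (ht : ∀ x, t x = 1 ∨ t x = -1) :
    {x | f x ≠ g x} ⊆
      {x | f x = t x} ∩ {x | g x ≠ t x} ∪ {x | f x ≠ t x} \ {x | g x ≠ t x} := by
  intro x hx
  by_cases hft : f x = t x
  · exact Or.inl ⟨hft, fun hgt ↦ hx (hft.trans hgt.symm)⟩
  · exact Or.inr ⟨hft, fun hgt ↦ hx (eq_of_ne_of_ne_of_pm_one (hf x) (hg x) (ht x) hft hgt)⟩

section Measure

variable {X : Type*} [MeasurableSpace X]

lemma measureReal_inter_eq_mul_cond (μ : Measure X) [IsFiniteMeasure μ] {s : Set X}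
    (hs : MeasurableSet s) (t : Set X) : μ.real (s ∩ t) = μ.real s * μ[|s].real t := by
  rw [measureReal_def, ← cond_mul_eq_inter hs, ENNReal.toReal_mul, mul_comm]
  rfl

lemma measureReal_add_le_of_half_smul_add_le {ν₁ ν₂ : Measure X} [IsFiniteMeasure ν₁]
    [IsFiniteMeasure ν₂] {s : Set X} {p : ℝ} (hp : 0 ≤ p)
    (h : ((1 / 2 : ℝ≥0∞) • ν₁ + (1 / 2 : ℝ≥0∞) • ν₂) s ≤ ENNReal.ofReal p) :
    ν₁.real s + ν₂.real s ≤ 2 * p := by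
  have h' := ENNReal.toReal_le_of_le_ofReal hp h
  rw [← measureReal_def, measureReal_add_apply (by simp [ENNReal.mul_eq_top])
    (by simp [ENNReal.mul_eq_top]), measureReal_ennreal_smul_apply,
    measureReal_ennreal_smul_apply] at h'
  norm_num at h'
  linarith

lemma measureReal_setOf_ne_le (μ : Measure X) [IsProbabilityMeasure μ] {f g t : X → ℝ}
    (hf : ∀ x, f x = 1 ∨ f x = -1) (hg : ∀ x, g x = 1 ∨ g x = -1)
    (ht : ∀ x, t x = 1 ∨ t x = -1) (hf_meas : Measurable f) (hg_meas : Measurable g)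
    (ht_meas : Measurable t) :
    μ.real {x | f x ≠ g x} ≤
      (1 - μ.real {x | f x ≠ t x}) * μ[|{x | f x = t x}].real {x | g x ≠ t x}
        + μ.real {x | f x ≠ t x} * (1 - μ[|{x | f x ≠ t x}].real {x | g x ≠ t x}) := by
  set C := {x | f x = t x}
  set I := {x | f x ≠ t x}
  set G := {x | g x ≠ t x}
  have hC : MeasurableSet C := measurableSet_eq_fun hf_meas ht_meas
  have hG : MeasurableSet G := (measurableSet_eq_fun hg_meas ht_meas).compl
  have hI : MeasurableSet I := hC.compl
  have hCI : μ.real C = 1 - μ.real I := by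
    linarith [show μ.real I = 1 - μ.real C from probReal_compl_eq_one_sub hC]
  have hI_split : μ.real (I \ G) + μ.real I * μ[|I].real G = μ.real I := by
    rw [← measureReal_inter_eq_mul_cond μ hI]
    exact measureReal_sdiff_add_inter hG
  have hne_le : μ.real {x | f x ≠ g x} ≤ μ.real C * μ[|C].real G + μ.real (I \ G) := by
    rw [← measureReal_inter_eq_mul_cond μ hC]
    exact (measureReal_mono (setOf_ne_subset hf hg ht)).trans (measureReal_union_le _ _)
  rw [hCI] at hne_le
  linarith

end Measure

lemma boosting_error_bound {p i a b : ℝ} (hp0 : 0 ≤ p) (hp : p ≤ 1 / 2) (hip : i ≤ p) (hb : 0 ≤ b)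
    (hab : a + b ≤ 2 * p) :
    i * b + p * ((1 - i) * a + i * (1 - b)) ≤ 3 * p ^ 2 - 2 * p ^ 3 := by
  linarith [mul_nonneg hb (sub_nonneg.2 hip),
    mul_nonneg (mul_nonneg hp0 (by linarith : 0 ≤ 1 - i)) (by linarith : 0 ≤ 2 * p - a - b),
    mul_nonneg (mul_nonneg hp0 (by linarith : 0 ≤ 1 - 2 * p)) (sub_nonneg.2 hip)]

theorem boosting_majority_vote_general {X : Type*} [MeasurableSpace X]
    (μ : Measure X) [IsProbabilityMeasure μ]
    (p : ℝ) (hp0 : 0 ≤ p) (hp : p < 1 / 2)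
    (hstar h1 h2 h3 : X → ℝ)
    (hstar_val : ∀ x, hstar x = 1 ∨ hstar x = -1)
    (h1_val : ∀ x, h1 x = 1 ∨ h1 x = -1)
    (h2_val : ∀ x, h2 x = 1 ∨ h2 x = -1)
    (h3_val : ∀ x, h3 x = 1 ∨ h3 x = -1)
    (hstar_meas : Measurable hstar) (h1_meas : Measurable h1)
    (h2_meas : Measurable h2)
    (err1 : μ {x | h1 x ≠ hstar x} ≤ ENNReal.ofReal p)
    (err2 : ((1 / 2 : ℝ≥0∞) • μ[|{x | h1 x = hstar x}]
              + (1 / 2 : ℝ≥0∞) • μ[|{x | h1 x ≠ hstar x}]) {x | h2 x ≠ hstar x}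
            ≤ ENNReal.ofReal p)
    (err3 : μ[|{x | h1 x ≠ h2 x}] {x | h3 x ≠ hstar x} ≤ ENNReal.ofReal p) :
    μ {x | Real.sign (h1 x + h2 x + h3 x) ≠ hstar x}
      ≤ ENNReal.ofReal (3 * p ^ 2 - 2 * p ^ 3) := by
  set C := {x | h1 x = hstar x}
  set I := {x | h1 x ≠ hstar x}
  set E := {x | h1 x ≠ h2 x}
  set H2 := {x | h2 x ≠ hstar x}
  have hI : MeasurableSet I := (measurableSet_eq_fun h1_meas hstar_meas).compl
  have hE : MeasurableSet E := (measurableSet_eq_fun h1_meas h2_meas).compl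
  rw [← ofReal_measureReal]
  refine ENNReal.ofReal_le_ofReal ?_
  calc μ.real {x | Real.sign (h1 x + h2 x + h3 x) ≠ hstar x}
      ≤ μ.real (I ∩ H2) + μ.real (E ∩ {x | h3 x ≠ hstar x}) :=
        (measureReal_mono (setOf_sign_add_add_ne_subset h1_val h2_val h3_val)).trans
          (measureReal_union_le _ _)
    _ ≤ μ.real I * μ[|I].real H2 + p * μ.real E := by
        rw [measureReal_inter_eq_mul_cond μ hI, measureReal_inter_eq_mul_cond μ hE, mul_comm p]
        gcongr
        exact ENNReal.toReal_le_of_le_ofReal hp0 err3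
    _ ≤ μ.real I * μ[|I].real H2
          + p * ((1 - μ.real I) * μ[|C].real H2 + μ.real I * (1 - μ[|I].real H2)) := by
        gcongr
        exact measureReal_setOf_ne_le μ h1_val h2_val hstar_val h1_meas h2_meas hstar_meas
    _ ≤ 3 * p ^ 2 - 2 * p ^ 3 :=
        boosting_error_bound hp0 hp.le (ENNReal.toReal_le_of_le_ofReal hp0 err1) measureReal_nonneg
          (by linarith [measureReal_add_le_of_half_smul_add_le hp0 err2])

/-- Schapire's boosting theorem: if `h1` has error at most `p` on `μ`, `h2` has error at most
`p` on the balanced mixture of the conditionals of `μ` on the correct/incorrect regions of `h1`,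
and `h3` has error at most `p` on `μ` conditioned on the disagreement region of `h1` and `h2`,
then the majority vote has error at most `3p² - 2p³` on `μ`. -/
theorem boosting_majority_vote {X : Type*} [MeasurableSpace X]
    (μ : Measure X) [IsProbabilityMeasure μ]
    (p : ℝ) (hp0 : 0 ≤ p) (hp : p < 1 / 2)
    (hstar h1 h2 h3 : X → ℝ)
    (hstar_val : ∀ x, hstar x = 1 ∨ hstar x = -1)
    (h1_val : ∀ x, h1 x = 1 ∨ h1 x = -1)
    (h2_val : ∀ x, h2 x = 1 ∨ h2 x = -1)
    (h3_val : ∀ x, h3 x = 1 ∨ h3 x = -1)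
    (hstar_meas : Measurable hstar) (h1_meas : Measurable h1)
    (h2_meas : Measurable h2) (h3_meas : Measurable h3)
    (hC : 0 < μ {x | h1 x = hstar x})
    (hI : 0 < μ {x | h1 x ≠ hstar x})
    (hE : 0 < μ {x | h1 x ≠ h2 x})
    (err1 : μ {x | h1 x ≠ hstar x} ≤ ENNReal.ofReal p)
    (err2 : ((1 / 2 : ℝ≥0∞) • μ[|{x | h1 x = hstar x}]
              + (1 / 2 : ℝ≥0∞) • μ[|{x | h1 x ≠ hstar x}]) {x | h2 x ≠ hstar x}
            ≤ ENNReal.ofReal p)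
    (err3 : μ[|{x | h1 x ≠ h2 x}] {x | h3 x ≠ hstar x} ≤ ENNReal.ofReal p) :
    μ {x | Real.sign (h1 x + h2 x + h3 x) ≠ hstar x}
      ≤ ENNReal.ofReal (3 * p ^ 2 - 2 * p ^ 3) :=
  boosting_majority_vote_general μ p hp0 hp hstar h1 h2 h3 hstar_val h1_val h2_val h3_val hstar_meas
    h1_meas h2_meas err1 err2 err3
end

section
/- Let α₀ ∈ (0,1] and define αᵢ₊₁ = αᵢ/(1 − αᵢ/8). For any C with α₀ ≤ C < 1 and any natural number k satisfying 8/α₀ − 8/C ≤ k and k·α₀ < 8, one has α_k ≥ C. In particular, taking C = 0.7, any natural number k with 8/α₀ − 80/7 ≤ k < 8/α₀ satisfies α_k ≥ 0.7. -/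
/-! The update `α ↦ α / (1 - α / c)` lowers `1 / α` by exactly `1 / c`, so after `k` steps
`1 / αₖ = 1 / α₀ - k / c` for as long as the right-hand side stays positive. With `c = 8`,
`αₖ ≥ C` is then the linear condition `8 / α₀ - k ≤ 8 / C` on `k`. -/

lemma inv_div_one_sub_div {x : ℝ} (c : ℝ) (hx : x ≠ 0) :
    (x / (1 - x / c))⁻¹ = x⁻¹ - c⁻¹ := by
  rw [inv_div, sub_div, div_div_cancel_left' hx, one_div]

section Recursion

variable {c : ℝ} {a : ℕ → ℝ} (hc : 0 < c) (harec : ∀ i, a (i + 1) = a i / (1 - a i / c))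
include hc harec

lemma inv_eq_inv_zero_sub_of_succ_eq_div_one_sub {k : ℕ} (hk : (k : ℝ) / c < (a 0)⁻¹) :
    (a k)⁻¹ = (a 0)⁻¹ - k / c := by
  induction k with
  | zero => simp
  | succ n ih =>
    have hn : (n : ℝ) / c < (a 0)⁻¹ :=
      lt_of_le_of_lt (div_le_div_of_nonneg_right (by simp) hc.le) hk
    have han : a n ≠ 0 := by
      rw [ne_eq, ← inv_eq_zero, ih hn]
      linarith
    rw [harec, inv_div_one_sub_div c han, ih hn]
    push_cast
    ring

lemma le_apply_of_inv_zero_sub_le {C : ℝ} (hC : 0 < C) {k : ℕ}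
    (hk : (k : ℝ) / c < (a 0)⁻¹) (hkC : (a 0)⁻¹ - k / c ≤ C⁻¹) : C ≤ a k := by
  have hinv := inv_eq_inv_zero_sub_of_succ_eq_div_one_sub hc harec hk
  have hak : 0 < a k := inv_pos.mp (by rw [hinv]; linarith)
  exact (inv_le_inv₀ hak hC).mp (hinv ▸ hkC)

end Recursion

theorem pruning_steps_reach_constant_fraction_general (α₀ : ℝ) (h0 : 0 < α₀)
    (a : ℕ → ℝ) (ha0 : a 0 = α₀) (harec : ∀ i, a (i + 1) = a i / (1 - a i / 8)) :
    (∀ C : ℝ, α₀ ≤ C → C < 1 →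
      ∀ k : ℕ, 8 / α₀ - 8 / C ≤ (k : ℝ) → (k : ℝ) * α₀ < 8 → C ≤ a k)
    ∧ (∀ k : ℕ, 8 / α₀ - 80 / 7 ≤ (k : ℝ) → (k : ℝ) < 8 / α₀ → 0.7 ≤ a k) := by
  have hpos (k : ℕ) (hk : (k : ℝ) < 8 / α₀) : (k : ℝ) / 8 < (a 0)⁻¹ := by
    rw [lt_div_iff₀ h0] at hk
    rw [ha0, div_lt_iff₀ (by norm_num), inv_mul_eq_div, lt_div_iff₀ h0]
    linarith
  refine ⟨fun C hαC _ k hk hkα => ?_, fun k hk hkα => ?_⟩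
  · have hC : 0 < C := h0.trans_le hαC
    refine le_apply_of_inv_zero_sub_le (by norm_num) harec hC
      (hpos k (by rwa [lt_div_iff₀ h0])) ?_
    rw [ha0]
    simp only [div_eq_mul_inv] at hk ⊢
    linarith
  · refine le_apply_of_inv_zero_sub_le (by norm_num) harec (by norm_num) (hpos k hkα) ?_
    rw [ha0]
    simp only [div_eq_mul_inv] at hk ⊢
    norm_num at hk ⊢
    linarith

/-- `O(1/α₀)` pruning steps suffice to raise the fraction of perfect workers to any constant
`C < 1`; in particular, to `0.7`. -/
theorem pruning_steps_reach_constant_fraction (α₀ : ℝ) (h0 : 0 < α₀) (h1 : α₀ ≤ 1)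
    (a : ℕ → ℝ) (ha0 : a 0 = α₀) (harec : ∀ i, a (i + 1) = a i / (1 - a i / 8)) :
    (∀ C : ℝ, α₀ ≤ C → C < 1 →
      ∀ k : ℕ, 8 / α₀ - 8 / C ≤ (k : ℝ) → (k : ℝ) * α₀ < 8 → C ≤ a k)
    ∧ (∀ k : ℕ, 8 / α₀ - 80 / 7 ≤ (k : ℝ) → (k : ℝ) < 8 / α₀ → 0.7 ≤ a k) :=
  pruning_steps_reach_constant_fraction_general α₀ h0 a ha0 harec
end

section
/- Let D_I and D_C be probability measures on a measurable space X and let ε ∈ (0,1]. Define the mixtures D_X := (√ε/2)·D_I + (1 − √ε/2)·D_C and D_2 := (1/2)·D_I + (1/2)·D_C. Then for every measurable set R with D_X(R) ≤ ε/4, one has D_2(R) ≤ √ε/4. -/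
open MeasureTheory
open scoped ENNReal

/-! With `s = √ε ≤ 1`, the balanced mixture is dominated, as a measure, by `s⁻¹ • D_X`:
the weights satisfy `s⁻¹ · (s/2) = 1/2` and `s⁻¹ · (1 - s/2) ≥ 1/2`. Evaluating at `R` gives
`D_2(R) ≤ s⁻¹ · ε/4 = s/4`. -/

namespace MeasureTheory.Measure

variable {X : Type*} [MeasurableSpace X]

theorem smul_add_smul_le_smul_smul_add_smul {a b a' b' c : ℝ≥0∞}
    (ha : a ≤ c * a') (hb : b ≤ c * b') (μ ν : Measure X) : a • μ + b • ν ≤ c • (a' • μ + b' • ν) := by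
  rw [smul_add, smul_smul, smul_smul]
  exact add_le_add (IsOrderedSMul.smul_le_smul_right _ _ ha μ)
    (IsOrderedSMul.smul_le_smul_right _ _ hb ν)

theorem half_smul_add_half_smul_le_smul_mixture {p : ℝ} (hp0 : 0 < p) (hp : p ≤ 1 / 2)
    (μ ν : Measure X) :
    (1 / 2 : ℝ≥0∞) • μ + (1 / 2 : ℝ≥0∞) • ν
      ≤ ENNReal.ofReal (2 * p)⁻¹ • (ENNReal.ofReal p • μ + ENNReal.ofReal (1 - p) • ν) := by
  have half_le {w : ℝ} (hw : 1 / 2 ≤ (2 * p)⁻¹ * w) :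
      (1 / 2 : ℝ≥0∞) ≤ ENNReal.ofReal (2 * p)⁻¹ * ENNReal.ofReal w := by
    rw [← ENNReal.ofReal_mul (by positivity)]
    calc (1 / 2 : ℝ≥0∞)
        = ENNReal.ofReal (1 / 2) := by rw [ENNReal.ofReal_div_of_pos two_pos]; simp
      _ ≤ _ := ENNReal.ofReal_le_ofReal hw
  refine smul_add_smul_le_smul_smul_add_smul (half_le ?_) (half_le ?_) μ ν
  · exact (by field_simp : (1 / 2 : ℝ) = (2 * p)⁻¹ * p).le
  · rw [inv_mul_eq_div, le_div_iff₀ (by positivity)]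
    linarith

end MeasureTheory.Measure

theorem mixture_density_transfer_general {X : Type*} [MeasurableSpace X]
    (DI DC : Measure X)
    (ε : ℝ) (hε0 : 0 < ε) (hε1 : ε ≤ 1)
    (R : Set X)
    (hR : (ENNReal.ofReal (Real.sqrt ε / 2) • DI
            + ENNReal.ofReal (1 - Real.sqrt ε / 2) • DC) R ≤ ENNReal.ofReal (ε / 4)) :
    ((1 / 2 : ℝ≥0∞) • DI + (1 / 2 : ℝ≥0∞) • DC) R ≤ ENNReal.ofReal (Real.sqrt ε / 4) := by
  have hs0 : 0 < Real.sqrt ε := Real.sqrt_pos.2 hε0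
  have hs1 : Real.sqrt ε ≤ 1 := Real.sqrt_le_one.2 hε1
  have hdom := Measure.half_smul_add_half_smul_le_smul_mixture (p := Real.sqrt ε / 2)
    (by positivity) (by linarith) DI DC
  calc ((1 / 2 : ℝ≥0∞) • DI + (1 / 2 : ℝ≥0∞) • DC) R
      ≤ ENNReal.ofReal (2 * (Real.sqrt ε / 2))⁻¹ * ENNReal.ofReal (ε / 4) :=
        (hdom R).trans (mul_le_mul_right hR _)
    _ = ENNReal.ofReal (Real.sqrt ε / 4) := by
        rw [← ENNReal.ofReal_mul (by positivity)]
        congr 1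
        field_simp
        rw [Real.sq_sqrt hε0.le]

/-- Transferring a density bound from the marginal mixture `D_X = (√ε/2)·D_I + (1 − √ε/2)·D_C`
to the balanced mixture `D_2 = (1/2)·D_I + (1/2)·D_C`: if `D_X(R) ≤ ε/4` then
`D_2(R) ≤ √ε/4`. -/
theorem mixture_density_transfer {X : Type*} [MeasurableSpace X]
    (DI DC : Measure X) [IsProbabilityMeasure DI] [IsProbabilityMeasure DC]
    (ε : ℝ) (hε0 : 0 < ε) (hε1 : ε ≤ 1)
    (R : Set X) (hRmeas : MeasurableSet R)
    (hR : (ENNReal.ofReal (Real.sqrt ε / 2) • DI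
            + ENNReal.ofReal (1 - Real.sqrt ε / 2) • DC) R ≤ ENNReal.ofReal (ε / 4)) :
    ((1 / 2 : ℝ≥0∞) • DI + (1 / 2 : ℝ≥0∞) • DC) R ≤ ENNReal.ofReal (Real.sqrt ε / 4) :=
  mixture_density_transfer_general DI DC ε hε0 hε1 R hR
end
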